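/- Let (M,g) be a semi-Riemannian manifold with Levi-Civita connection ∇. Suppose T = ℓ·∇τ for smooth functions τ, ℓ with dℓ(x) = 0 for all x in a distribution H, and suppose k is a vector field with d(g(k,T))(x) = 0 for all x ∈ H. Then for every vector field x taking values in H, g([k,x], T) = 0. -/
import Mathlib


/-- Abstract data of a semi-Riemannian manifold `M`: a module `V` of vector
fields over the ring of smooth functions `M → ℝ`, a metric `g`, a Lie bracket,
a Levi-Civita connection `conn` and directional derivative `D`, satisfying the
usual axioms (bilinearity, Leibniz rule, metric compatibility,
torsion-freeness, and the bracket identity for derivatives). -/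
structure CovariantData (M : Type*) (V : Type*) [AddCommGroup V]
    [Module (M → ℝ) V] where
  g : V → V → M → ℝ
  bracket : V → V → V
  conn : V → V → V
  D : V → (M → ℝ) → M → ℝ
  g_symm : ∀ X Y, g X Y = g Y X
  g_addLeft : ∀ X Y Z, g (X + Y) Z = g X Z + g Y Z
  g_smulLeft : ∀ (f : M → ℝ) (X Y : V), g (f • X) Y = f * g X Y
  conn_addLeft : ∀ X Y Z, conn (X + Y) Z = conn X Z + conn Y Z
  conn_addRight : ∀ X Y Z, conn X (Y + Z) = conn X Y + conn X Z
  conn_smulLeft : ∀ (f : M → ℝ) (X Y : V), conn (f • X) Y = f • conn X Y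
  leibniz : ∀ (X : V) (f : M → ℝ) (Y : V),
    conn X (f • Y) = (D X f) • Y + f • conn X Y
  D_add : ∀ (X : V) (f h : M → ℝ), D X (f + h) = D X f + D X h
  D_const : ∀ (X : V) (c : ℝ), D X (fun _ => c) = 0
  compat : ∀ X Y Z, D X (g Y Z) = g (conn X Y) Z + g Y (conn X Z)
  torsion_free : ∀ X Y, conn X Y - conn Y X = bracket X Y
  D_bracket : ∀ X Y f, D X (D Y f) - D Y (D X f) = D (bracket X Y) f

namespace CovariantData

variable {M V : Type*} [AddCommGroup V] [Module (M → ℝ) V] (d : CovariantData M V)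

lemma g_smulRight (f : M → ℝ) (X Y : V) : d.g X (f • Y) = f * d.g X Y := by
  rw [d.g_symm, d.g_smulLeft, d.g_symm]

lemma g_addRight (X Y Z : V) : d.g X (Y + Z) = d.g X Y + d.g X Z := by
  rw [d.g_symm, d.g_addLeft, d.g_symm Y X, d.g_symm Z X]

lemma g_negLeft (X Y : V) : d.g (-X) Y = -(d.g X Y) := by
  have : (-X : V) = (-1 : M → ℝ) • X := by rw [neg_one_smul]
  rw [this, d.g_smulLeft]
  funext q
  simp

lemma g_subLeft (X Y Z : V) : d.g (X - Y) Z = d.g X Z - d.g Y Z := by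
  rw [sub_eq_add_neg, d.g_addLeft, d.g_negLeft, sub_eq_add_neg]

lemma g_subRight (X Y Z : V) : d.g X (Y - Z) = d.g X Y - d.g X Z := by
  rw [d.g_symm, d.g_subLeft, d.g_symm Y X, d.g_symm Z X]

lemma D_zero (X : V) : d.D X (0 : M → ℝ) = 0 := d.D_const X 0

end CovariantData

/-- Suppose `T = ℓ·∇τ`, with `ℓ` constant along a distribution `H`
(here modelled as a set of vector fields taking values in the distribution,
each orthogonal to `T`), and the derivative of `g(k,T)` along `H` vanishes.
Then `g([k,x],T) = 0` for every vector field `x` in `H`. -/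
theorem stmt6 {M V : Type*} [AddCommGroup V] [Module (M → ℝ) V]
    (d : CovariantData M V) (k T gradτ : V) (τ ℓ : M → ℝ) (H : Set V)
    (hgrad : ∀ X : V, d.g gradτ X = d.D X τ)
    (hT : T = ℓ • gradτ)
    (hHT : ∀ x ∈ H, d.g x T = 0)
    (hℓ : ∀ x ∈ H, d.D x ℓ = 0)
    (hkT : ∀ x ∈ H, d.D x (d.g k T) = 0) :
    ∀ x ∈ H, d.g (d.bracket k x) T = 0 := by
  intro x hx
  have hgx : d.g x T = 0 := hHT x hx
  have hDl : d.D x ℓ = 0 := hℓ x hx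
  have hDkT : d.D x (d.g k T) = 0 := hkT x hx
  -- h1 : differentiate g x T = 0 along k
  have h1 : d.g (d.conn k x) T + d.g x (d.conn k T) = 0 := by
    have c := d.compat k x T
    rw [hgx] at c
    rw [← c]
    exact d.D_zero k
  -- h2 : hypothesis hkT expanded
  have h2 : d.g (d.conn x k) T + d.g k (d.conn x T) = 0 :=
    (d.compat x k T).symm.trans hDkT
  -- covariant derivatives of T
  have h3 : d.conn x T = ℓ • d.conn x gradτ := by
    rw [hT, d.leibniz, hDl, zero_smul, zero_add]
  have h4 : d.conn k T = d.D k ℓ • gradτ + ℓ • d.conn k gradτ := by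
    rw [hT, d.leibniz]
  have h3' : d.g k (d.conn x T) = ℓ * d.g k (d.conn x gradτ) := by
    rw [h3, d.g_smulRight]
  have h4' : d.g x (d.conn k T)
      = d.D k ℓ * d.g x gradτ + ℓ * d.g x (d.conn k gradτ) := by
    rw [h4, d.g_addRight, d.g_smulRight, d.g_smulRight]
  -- symmetry of the Hessian of τ
  have c1 := d.compat k gradτ x
  rw [hgrad x] at c1
  have c2 := d.compat x gradτ k
  rw [hgrad k] at c2
  have c3 := d.D_bracket k x τ
  have c4 : d.D (d.bracket k x) τ = d.g gradτ (d.bracket k x) := (hgrad _).symm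
  have c5 : d.g gradτ (d.bracket k x)
      = d.g gradτ (d.conn k x) - d.g gradτ (d.conn x k) := by
    rw [← d.torsion_free, d.g_subRight]
  have c6 : d.g gradτ (d.conn k x) = d.D (d.conn k x) τ := hgrad _
  have c7 : d.g gradτ (d.conn x k) = d.D (d.conn x k) τ := hgrad _
  have h7'' : d.g (d.conn k gradτ) x = d.g (d.conn x gradτ) k := by
    linear_combination -c1 + c2 + c3 + c4 + c5
  have h7' : d.g x (d.conn k gradτ) = d.g k (d.conn x gradτ) := by
    rw [d.g_symm x (d.conn k gradτ), d.g_symm k (d.conn x gradτ)]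
    exact h7''
  -- main identity : g([k,x],T) = -(D_k ℓ) · (g x gradτ)
  have hb' : d.g (d.bracket k x) T
      = d.g (d.conn k x) T - d.g (d.conn x k) T := by
    rw [← d.torsion_free, d.g_subLeft]
  have hmain : d.g (d.bracket k x) T = -(d.D k ℓ * d.g x gradτ) := by
    linear_combination hb' + h1 - h2 - h4' + h3' - ℓ * h7'
  -- the other representation : g([k,x],T) = ℓ · g([k,x], gradτ)
  have hGB : d.g (d.bracket k x) T = ℓ * d.g (d.bracket k x) gradτ := by
    rw [hT, d.g_smulRight]
  -- orthogonality : ℓ · (g x gradτ) = 0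
  have hlA : ℓ * d.g x gradτ = 0 := by
    have c := hgx
    rw [hT, d.g_smulRight] at c
    exact c
  -- combine : the square of the goal vanishes
  have hsq : d.g (d.bracket k x) T * d.g (d.bracket k x) T = 0 := by
    calc d.g (d.bracket k x) T * d.g (d.bracket k x) T
        = (ℓ * d.g (d.bracket k x) gradτ) * (-(d.D k ℓ * d.g x gradτ)) := by
          rw [← hGB, ← hmain]
      _ = -(d.g (d.bracket k x) gradτ * d.D k ℓ) * (ℓ * d.g x gradτ) := by
          ring
      _ = 0 := by rw [hlA]; ring
  funext q
  have hq : d.g (d.bracket k x) T q * d.g (d.bracket k x) T q = 0 :=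
    congrFun hsq q
  exact mul_self_eq_zero.mp hq
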